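/- arXiv:math/0304164 — 3 statements merged into one kernel-verified Lean document; each statement's English description precedes it below -/
import Mathlib

section
/- In any coaugmented k-coalgebra C, the inclusion–exclusion maps agree with the closed formula: for every n ≥ 1, δ'_{{1,…,n}} = (id_C − u∘ε)^{⊗n} ∘ Δ^n, where δ'_Φ := Σ_{Ψ⊆Φ} (−1)^{|Φ|−|Ψ|} Δ_Ψ. (Lemma 2.6(a)) -/
open TensorProduct PiTensorProduct

noncomputable section

namespace CDP

variable (k : Type) [Field k] (C : Type) [AddCommGroup C] [Module k C]

/-- The canonical equivalence `⨂[k]^1 C ≃ C`. -/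
def tpowOne : (⨂[k]^1 C) ≃ₗ[k] C := PiTensorProduct.subsingletonEquiv (0 : Fin 1)

/-- Splitting a tensor power. -/
def tpowSplit (a b : ℕ) : (⨂[k]^(a+b) C) ≃ₗ[k] (⨂[k]^a C) ⊗[k] (⨂[k]^b C) :=
  (PiTensorProduct.reindex k (fun _ : Fin (a+b) => C) finSumFinEquiv.symm).trans
    (PiTensorProduct.tmulEquiv k C).symm

/-- Prepending a tensor factor. -/
def consTP (n : ℕ) : C ⊗[k] (⨂[k]^n C) →ₗ[k] ⨂[k]^(n+1) C :=
  (PiTensorProduct.reindex k (fun _ : Fin (1+n) => C)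
      (finCongr (Nat.add_comm 1 n))).toLinearMap ∘ₗ
    (tpowSplit k C 1 n).symm.toLinearMap ∘ₗ
    (TensorProduct.map (tpowOne k C).symm.toLinearMap LinearMap.id)

variable {C} in
/-- The iterated comultiplication `Δ^n : C → C^{⊗ n}`, with `Δ^0 := ε` and
`Δ^1 = id` (up to the canonical identification `C ≅ C^{⊗1}`). -/
def DeltaIter (comul : C →ₗ[k] C ⊗[k] C) (counit : C →ₗ[k] k) :
    (n : ℕ) → (C →ₗ[k] ⨂[k]^n C)
  | 0 => (PiTensorProduct.isEmptyEquiv (Fin 0)).symm.toLinearMap ∘ₗ counit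
  | n+1 => consTP k C n ∘ₗ
      (TensorProduct.map LinearMap.id (DeltaIter comul counit n)) ∘ₗ comul

variable {C} in
/-- The projection `id - u ∘ ε` associated to the coaugmentation `one = u(1)`. -/
def proj (counit : C →ₗ[k] k) (one : C) : C →ₗ[k] C :=
  LinearMap.id - (LinearMap.toSpanSingleton k C one) ∘ₗ counit

variable {C} in
/-- Drinfeld's maps `δ_n := (id - u∘ε)^{⊗n} ∘ Δ^n`. -/
def deltaN (comul : C →ₗ[k] C ⊗[k] C) (counit : C →ₗ[k] k) (one : C) (n : ℕ) :
    C →ₗ[k] ⨂[k]^n C :=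
  (PiTensorProduct.map fun _ : Fin n => proj k counit one) ∘ₗ DeltaIter k comul counit n

variable {C} in
/-- The map `Δ_Ψ := j_Ψ ∘ Δ^{|Ψ|} : C → C^{⊗ n}`, where
`j_Ψ : C^{⊗ |Ψ|} → C^{⊗ n}` inserts the group-like element `one` in the slots
outside `Ψ` (using the increasing identification of `Fin |Ψ|` with `Ψ`). -/
def DeltaSub (comul : C →ₗ[k] C ⊗[k] C) (counit : C →ₗ[k] k) (one : C)
    {n : ℕ} (Ψ : Finset (Fin n)) : C →ₗ[k] ⨂[k]^n C :=
  (PiTensorProduct.lift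
      ((PiTensorProduct.tprod k (s := fun _ : Fin n => C)).restr Ψ rfl one)) ∘ₗ
    DeltaIter k comul counit Ψ.card

end CDP

open CDP

/-! The tensor power of `id - u ∘ ε` expands binomially into the `2ⁿ` tensor products of
`id` (on the slots of some `Ψ`) and of `u ∘ ε` (elsewhere), with sign `(-1)^(n - |Ψ|)`.
Each such product, composed with `Δⁿ`, is `Δ_Ψ`: peeling off the first tensor factor, a slot
carrying `id` keeps the comultiplication, while by counitality `(u ∘ ε ⊗ F) ∘ Δ = 1̲ ⊗ F`. -/

theorem PiTensorProduct.map_sub_eq_sum {ι R : Type*} [Fintype ι] [DecidableEq ι] [CommRing R]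
    {M N : ι → Type*} [∀ i, AddCommGroup (M i)] [∀ i, Module R (M i)]
    [∀ i, AddCommGroup (N i)] [∀ i, Module R (N i)] (f g : ∀ i, M i →ₗ[R] N i) :
    PiTensorProduct.map (f - g)
      = ∑ Ψ : Finset ι, (-1 : ℤ) ^ (Fintype.card ι - Ψ.card) •
          PiTensorProduct.map (Ψ.piecewise f g) := by
  rw [sub_eq_add_neg, ← mapMultilinear_apply, MultilinearMap.map_add_univ]
  refine Finset.sum_congr rfl fun Ψ _ => ?_
  have hsign : Ψ.piecewise f (-g)
      = Ψᶜ.piecewise (fun i => (-1 : R) • Ψ.piecewise f g i) (Ψ.piecewise f g) := by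
    funext i
    by_cases hi : i ∈ Ψ <;> simp [hi]
  rw [hsign, MultilinearMap.map_piecewise_smul, Finset.prod_const, Finset.card_compl,
    mapMultilinear_apply, ← Int.cast_smul_eq_zsmul R]
  push_cast
  rfl

theorem Finset.orderIsoOfFin_symm_eq_of_strictMono {α : Type*} [LinearOrder α] {s : Finset α}
    {m : ℕ} (h : s.card = m) {f : Fin m → α} (hf : StrictMono f) (hfs : ∀ i, f i ∈ s)
    {x : α} (hx : x ∈ s) {i : Fin m} (hi : f i = x) :
    (s.orderIsoOfFin h).symm ⟨x, hx⟩ = i := by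
  subst hi
  rw [OrderIso.symm_apply_eq, Subtype.ext_iff, coe_orderIsoOfFin_apply,
    ← orderEmbOfFin_unique h hfs hf]

theorem Finset.orderEmbOfFin_orderIsoOfFin_symm {α : Type*} [LinearOrder α] (s : Finset α)
    {m : ℕ} (h : s.card = m) (x : s) :
    s.orderEmbOfFin h ((s.orderIsoOfFin h).symm x) = x := by
  rw [← coe_orderIsoOfFin_apply, OrderIso.apply_symm_apply]

namespace CDP

section FinsetFinSucc

variable {n : ℕ}

def succPreimage (Ψ : Finset (Fin (n + 1))) : Finset (Fin n) :=
  Ψ.preimage Fin.succ (Fin.succ_injective n).injOn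

@[simp]
theorem mem_succPreimage {Ψ : Finset (Fin (n + 1))} {i : Fin n} :
    i ∈ succPreimage Ψ ↔ i.succ ∈ Ψ :=
  Finset.mem_preimage

theorem map_succEmb_succPreimage (Ψ : Finset (Fin (n + 1))) :
    (succPreimage Ψ).map (Fin.succEmb n) = Ψ.erase 0 := by
  ext j
  refine Fin.cases ?_ (fun i => ?_) j <;> simp [Fin.succ_ne_zero]

theorem card_eq_card_succPreimage_of_zero_notMem {Ψ : Finset (Fin (n + 1))} (h0 : 0 ∉ Ψ) :
    Ψ.card = (succPreimage Ψ).card := by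
  rw [← Finset.card_map (Fin.succEmb n), map_succEmb_succPreimage, Finset.erase_eq_of_notMem h0]

theorem card_eq_card_succPreimage_add_one_of_zero_mem {Ψ : Finset (Fin (n + 1))} (h0 : 0 ∈ Ψ) :
    Ψ.card = (succPreimage Ψ).card + 1 := by
  rw [← Finset.card_map (Fin.succEmb n), map_succEmb_succPreimage, Finset.card_erase_add_one h0]

theorem piecewise_succ {β : Type*} (Ψ : Finset (Fin (n + 1))) (f g : Fin (n + 1) → β) :
    (fun i : Fin n => Ψ.piecewise f g i.succ)
      = (succPreimage Ψ).piecewise (fun i => f i.succ) (fun i => g i.succ) := by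
  funext i
  by_cases hi : i.succ ∈ Ψ <;> simp [Finset.piecewise, hi]

theorem orderIsoOfFin_symm_succ_of_zero_notMem {Ψ : Finset (Fin (n + 1))}
    (h : Ψ.card = (succPreimage Ψ).card) {i : Fin n} (hi : i.succ ∈ Ψ) :
    (Ψ.orderIsoOfFin h).symm ⟨i.succ, hi⟩
      = ((succPreimage Ψ).orderIsoOfFin rfl).symm ⟨i, mem_succPreimage.2 hi⟩ :=
  Finset.orderIsoOfFin_symm_eq_of_strictMono h
    (Fin.strictMono_succ.comp ((succPreimage Ψ).orderEmbOfFin rfl).strictMono)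
    (fun j => mem_succPreimage.1 (Finset.orderEmbOfFin_mem _ rfl j)) hi
    (by simp only [Function.comp_apply, Finset.orderEmbOfFin_orderIsoOfFin_symm])

/-- When `0 ∈ Ψ`, the increasing enumeration of `Ψ` is `0` followed by the successors of the
increasing enumeration of `succPreimage Ψ`. -/
theorem strictMono_cons_zero_succPreimage (Ψ : Finset (Fin (n + 1))) :
    StrictMono (Fin.cons (α := fun _ => Fin (n + 1)) 0
      (Fin.succ ∘ (succPreimage Ψ).orderEmbOfFin rfl)) :=
  Fin.strictMono_cons.2 ⟨fun _ => Fin.succ_pos _,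
    Fin.strictMono_succ.comp ((succPreimage Ψ).orderEmbOfFin rfl).strictMono⟩

theorem cons_zero_succPreimage_mem {Ψ : Finset (Fin (n + 1))} (h0 : 0 ∈ Ψ)
    (j : Fin ((succPreimage Ψ).card + 1)) :
    Fin.cons (α := fun _ => Fin (n + 1)) 0 (Fin.succ ∘ (succPreimage Ψ).orderEmbOfFin rfl) j
      ∈ Ψ :=
  Fin.cases h0 (fun j => mem_succPreimage.1 (Finset.orderEmbOfFin_mem _ rfl j)) j

theorem orderIsoOfFin_symm_zero_of_zero_mem {Ψ : Finset (Fin (n + 1))} (h0 : 0 ∈ Ψ)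
    (h : Ψ.card = (succPreimage Ψ).card + 1) : (Ψ.orderIsoOfFin h).symm ⟨0, h0⟩ = 0 :=
  Finset.orderIsoOfFin_symm_eq_of_strictMono h (strictMono_cons_zero_succPreimage Ψ)
    (cons_zero_succPreimage_mem h0) h0 rfl

theorem orderIsoOfFin_symm_succ_of_zero_mem {Ψ : Finset (Fin (n + 1))} (h0 : 0 ∈ Ψ)
    (h : Ψ.card = (succPreimage Ψ).card + 1) {i : Fin n} (hi : i.succ ∈ Ψ) :
    (Ψ.orderIsoOfFin h).symm ⟨i.succ, hi⟩
      = (((succPreimage Ψ).orderIsoOfFin rfl).symm ⟨i, mem_succPreimage.2 hi⟩).succ :=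
  Finset.orderIsoOfFin_symm_eq_of_strictMono h (strictMono_cons_zero_succPreimage Ψ)
    (cons_zero_succPreimage_mem h0) hi
    (by simp only [Fin.cons_succ, Function.comp_apply, Finset.orderEmbOfFin_orderIsoOfFin_symm])

end FinsetFinSucc

section TensorPower

variable (k : Type) [Field k] {C D : Type} [AddCommGroup C] [Module k C]
  [AddCommGroup D] [Module k D]

theorem consTP_tmul_tprod (n : ℕ) (x : C) (v : Fin n → C) :
    consTP k C n (x ⊗ₜ[k] PiTensorProduct.tprod k v)
      = PiTensorProduct.tprod k (Fin.cons x v) := by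
  simp only [consTP, tpowSplit, tpowOne, LinearMap.coe_comp, LinearEquiv.coe_coe,
    Function.comp_apply, map_tmul, LinearMap.id_coe, id_eq, subsingletonEquiv_symm_apply,
    LinearEquiv.trans_symm, LinearEquiv.trans_apply, LinearEquiv.symm_symm, tmulEquiv_apply,
    ← reindex_symm, reindex_tprod]
  congr 1
  funext j
  refine Fin.cases ?_ (fun i => ?_) j
  · rw [show (finCongr (Nat.add_comm 1 n)).symm 0 = finSumFinEquiv (Sum.inl (0 : Fin 1)) from rfl,
      Equiv.symm_apply_apply]
    rfl
  · rw [show (finCongr (Nat.add_comm 1 n)).symm i.succ = finSumFinEquiv (Sum.inr i) from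
        Fin.ext (by simp [Nat.add_comm]),
      Equiv.symm_apply_apply]
    rfl

theorem map_comp_consTP (n : ℕ) (f : Fin (n + 1) → (C →ₗ[k] D)) :
    PiTensorProduct.map f ∘ₗ consTP k C n
      = consTP k D n ∘ₗ TensorProduct.map (f 0) (PiTensorProduct.map fun i => f i.succ) := by
  refine TensorProduct.ext' fun x y => ?_
  induction y using PiTensorProduct.induction_on with
  | smul_tprod r v =>
    simp only [tmul_smul, map_smul, LinearMap.comp_apply, map_tmul, consTP_tmul_tprod,
      PiTensorProduct.map_tprod]
    congr 2
    funext j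
    refine Fin.cases ?_ (fun i => ?_) j <;> simp
  | add a b ha hb => simp only [tmul_add, map_add, ha, hb]

/-- The map `j_Ψ`, for `Ψ` of cardinality `m`. -/
def insertOne (one : C) {n m : ℕ} (Ψ : Finset (Fin n)) (h : Ψ.card = m) :
    (⨂[k]^m C) →ₗ[k] ⨂[k]^n C :=
  PiTensorProduct.lift ((PiTensorProduct.tprod k (s := fun _ : Fin n => C)).restr Ψ h one)

theorem insertOne_tprod (one : C) {n m : ℕ} (Ψ : Finset (Fin n)) (h : Ψ.card = m)
    (v : Fin m → C) :
    insertOne k one Ψ h (PiTensorProduct.tprod k v)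
      = PiTensorProduct.tprod k fun j =>
          if hj : j ∈ Ψ then v ((Ψ.orderIsoOfFin h).symm ⟨j, hj⟩) else one :=
  PiTensorProduct.lift.tprod v

theorem insertOne_of_zero_notMem {n : ℕ} (one : C) (Ψ : Finset (Fin (n + 1))) (h0 : 0 ∉ Ψ)
    (h : Ψ.card = (succPreimage Ψ).card) :
    insertOne k one Ψ h
      = consTP k C n ∘ₗ TensorProduct.mk k C _ one ∘ₗ
          insertOne k one (succPreimage Ψ) rfl := by
  refine LinearMap.ext fun y => ?_
  induction y using PiTensorProduct.induction_on with
  | smul_tprod r v =>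
    simp only [map_smul, LinearMap.comp_apply, insertOne_tprod, TensorProduct.mk_apply,
      consTP_tmul_tprod]
    congr 2
    funext j
    refine Fin.cases ?_ (fun i => ?_) j
    · rw [dif_neg h0, Fin.cons_zero]
    · by_cases hi : i.succ ∈ Ψ
      · rw [dif_pos hi, Fin.cons_succ, dif_pos (mem_succPreimage.2 hi),
          orderIsoOfFin_symm_succ_of_zero_notMem h hi]
      · rw [dif_neg hi, Fin.cons_succ, dif_neg (mt mem_succPreimage.1 hi)]
  | add a b ha hb => simp only [map_add, ha, hb]

theorem insertOne_comp_consTP_of_zero_mem {n : ℕ} (one : C) (Ψ : Finset (Fin (n + 1)))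
    (h0 : 0 ∈ Ψ) (h : Ψ.card = (succPreimage Ψ).card + 1) :
    insertOne k one Ψ h ∘ₗ consTP k C (succPreimage Ψ).card
      = consTP k C n ∘ₗ
          TensorProduct.map LinearMap.id (insertOne k one (succPreimage Ψ) rfl) := by
  refine TensorProduct.ext' fun x y => ?_
  induction y using PiTensorProduct.induction_on with
  | smul_tprod r v =>
    simp only [tmul_smul, map_smul, LinearMap.comp_apply, map_tmul, LinearMap.id_apply,
      insertOne_tprod, consTP_tmul_tprod]
    congr 2
    funext j
    refine Fin.cases ?_ (fun i => ?_) j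
    · rw [dif_pos h0, orderIsoOfFin_symm_zero_of_zero_mem h0 h, Fin.cons_zero, Fin.cons_zero]
    · by_cases hi : i.succ ∈ Ψ
      · rw [dif_pos hi, Fin.cons_succ, dif_pos (mem_succPreimage.2 hi),
          orderIsoOfFin_symm_succ_of_zero_mem h0 h hi, Fin.cons_succ]
      · rw [dif_neg hi, Fin.cons_succ, dif_neg (mt mem_succPreimage.1 hi)]
  | add a b ha hb => simp only [tmul_add, map_add, ha, hb]

variable (comul : C →ₗ[k] C ⊗[k] C) (counit : C →ₗ[k] k)

theorem DeltaSub_eq_of_card_eq (one : C) {n : ℕ} (Ψ : Finset (Fin n)) {m : ℕ}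
    (h : Ψ.card = m) :
    DeltaSub k comul counit one Ψ
      = insertOne k one Ψ h ∘ₗ DeltaIter k comul counit m := by
  subst h
  rfl

theorem map_comp_DeltaIter_succ (n : ℕ) (f : Fin (n + 1) → (C →ₗ[k] C)) :
    PiTensorProduct.map f ∘ₗ DeltaIter k comul counit (n + 1)
      = consTP k C n ∘ₗ TensorProduct.map (f 0)
          (PiTensorProduct.map (fun i => f i.succ) ∘ₗ DeltaIter k comul counit n) ∘ₗ
          comul := by
  rw [DeltaIter, ← LinearMap.comp_assoc, map_comp_consTP, LinearMap.comp_assoc,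
    ← LinearMap.comp_assoc _ _ (TensorProduct.map (f 0) _), ← TensorProduct.map_comp,
    LinearMap.comp_id]

end TensorPower

section Coalgebra

variable (k : Type) [Field k] {C : Type} [AddCommGroup C] [Module k C] [Coalgebra k C]

theorem map_toSpanSingleton_comp_counit_comp_comul (one : C) {M : Type} [AddCommGroup M]
    [Module k M] (F : C →ₗ[k] M) :
    TensorProduct.map (LinearMap.toSpanSingleton k C one ∘ₗ Coalgebra.counit) F ∘ₗ
        Coalgebra.comul
      = TensorProduct.mk k C M one ∘ₗ F := by
  have hsplit : TensorProduct.map (LinearMap.toSpanSingleton k C one ∘ₗ Coalgebra.counit) F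
      = TensorProduct.map (LinearMap.toSpanSingleton k C one) F ∘ₗ
          (Coalgebra.counit (R := k) (A := C)).rTensor C := by
    rw [LinearMap.rTensor, ← TensorProduct.map_comp, LinearMap.comp_id]
  rw [hsplit, LinearMap.comp_assoc, Coalgebra.rTensor_counit_comp_comul]
  ext x
  simp

theorem map_piecewise_comp_DeltaIter (one : C) (n : ℕ) (Ψ : Finset (Fin n)) :
    PiTensorProduct.map (Ψ.piecewise (fun _ => LinearMap.id)
        (fun _ => LinearMap.toSpanSingleton k C one ∘ₗ Coalgebra.counit)) ∘ₗ
      DeltaIter k Coalgebra.comul Coalgebra.counit n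
      = DeltaSub k Coalgebra.comul Coalgebra.counit one Ψ := by
  induction n with
  | zero =>
    obtain rfl : Ψ = ∅ := Subsingleton.elim _ _
    rw [DeltaSub_eq_of_card_eq k _ _ one ∅ Finset.card_empty]
    congr 1
    ext v
    rw [LinearMap.compMultilinearMap_apply, LinearMap.compMultilinearMap_apply,
      PiTensorProduct.map_tprod, insertOne_tprod]
    exact congrArg (PiTensorProduct.tprod k) (funext fun i => i.elim0)
  | succ n ih =>
    rw [map_comp_DeltaIter_succ, piecewise_succ, ih]
    by_cases h0 : 0 ∈ Ψ
    · have hcard := card_eq_card_succPreimage_add_one_of_zero_mem h0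
      rw [Finset.piecewise_eq_of_mem _ _ _ h0, DeltaSub_eq_of_card_eq k _ _ one Ψ hcard, DeltaIter,
        ← LinearMap.comp_assoc _ (consTP k C _),
        insertOne_comp_consTP_of_zero_mem k one Ψ h0 hcard,
        LinearMap.comp_assoc, ← LinearMap.comp_assoc _ _ (TensorProduct.map LinearMap.id _),
        ← TensorProduct.map_comp, LinearMap.comp_id,
        DeltaSub_eq_of_card_eq k _ _ one (succPreimage Ψ) rfl]
    · have hcard := card_eq_card_succPreimage_of_zero_notMem h0
      rw [Finset.piecewise_eq_of_notMem _ _ _ h0, map_toSpanSingleton_comp_counit_comp_comul,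
        DeltaSub_eq_of_card_eq k _ _ one Ψ hcard, insertOne_of_zero_notMem k one Ψ h0 hcard,
        DeltaSub_eq_of_card_eq k _ _ one (succPreimage Ψ) rfl]
      rfl

end Coalgebra

end CDP

theorem inclusion_exclusion_delta_general
    (k : Type) [Field k] (C : Type) [AddCommGroup C] [Module k C] [Coalgebra k C]
    (one : C)
    (n : ℕ) :
    (∑ Ψ : Finset (Fin n), ((-1 : ℤ) ^ (n - Ψ.card)) •
        DeltaSub k Coalgebra.comul Coalgebra.counit one Ψ)
      = deltaN k Coalgebra.comul Coalgebra.counit one n := by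
  rw [deltaN, show (fun _ : Fin n => proj k Coalgebra.counit one)
      = (fun _ => LinearMap.id) - fun _ => LinearMap.toSpanSingleton k C one ∘ₗ Coalgebra.counit
      from rfl, map_sub_eq_sum, Fintype.card_fin]
  refine (Finset.sum_congr rfl fun Ψ _ => ?_).trans (map_sum (LinearMap.lcomp k _ _) _ _).symm
  rw [map_zsmul, LinearMap.lcomp_apply', map_piecewise_comp_DeltaIter]

/-- **Lemma 2.6(a).** In any coaugmented `k`-coalgebra `C` (with group-like
coaugmentation element `one = u(1)`), the inclusion–exclusion maps agree with
the closed formula: for every `n ≥ 1`,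
`δ'_{{1,…,n}} := Σ_{Ψ ⊆ {1,…,n}} (−1)^{n−|Ψ|} Δ_Ψ = (id_C − u∘ε)^{⊗n} ∘ Δ^n`. -/
theorem inclusion_exclusion_delta
    (k : Type) [Field k] (C : Type) [AddCommGroup C] [Module k C] [Coalgebra k C]
    (one : C) (hcomul : Coalgebra.comul one = one ⊗ₜ[k] one)
    (hcounit : Coalgebra.counit one = (1 : k))
    (n : ℕ) (hn : 1 ≤ n) :
    (∑ Ψ : Finset (Fin n), ((-1 : ℤ) ^ (n - Ψ.card)) •
        DeltaSub k Coalgebra.comul Coalgebra.counit one Ψ)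
      = deltaN k Coalgebra.comul Coalgebra.counit one n :=
  inclusion_exclusion_delta_general k C one n
end
end

section
/- Let C be a counital coassociative k-coalgebra and {F_z}_{z∈ℤ} an exhaustive coalgebra filtration of C, i.e. an increasing family of subspaces with ⋃_{z∈ℤ} F_z = C and Δ(F_z) ⊆ Σ_{r+s=z} F_r ⊗ F_s for all z ∈ ℤ. Then the intersection F_↓ := ⋂_{z∈ℤ} F_z satisfies Δ(F_↓) ⊆ C ⊗ F_↓ + F_↓ ⊗ C, so that C/F_↓ inherits a quotient coalgebra structure. (Lemma 1.6) -/
/-! For `x ∈ F_↓` and any `a, b`, `x ∈ F_{a+b}`, so by monotonicity `Δx` lies in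
`Σ_{r+s=a+b} F_r ⊗ F_s ⊆ F_a ⊗ C + C ⊗ F_b` (either `r ≤ a` or `s ≤ b`). Over a field,
`⋂_{a,b} (X_a ⊗ C + C ⊗ Y_b) = (⋂ X_a) ⊗ C + C ⊗ (⋂ Y_b)`: `C ⊗ -` commutes with arbitrary
intersections (expand in a basis of the left factor), and applying `(1 - p) ⊗ 1` for a projection
`p` of `C` onto `X` reduces `X ⊗ C + C ⊗ Y_b` to `C ⊗ Y_b`. -/

open TensorProduct

noncomputable section

namespace CDP

variable (k : Type) [Field k] (C : Type) [AddCommGroup C] [Module k C]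

/-- For subspaces `X, Y ⊆ C`, the subspace `X ⊗ Y ⊆ C ⊗ C`. -/
def tsub (X Y : Submodule k C) : Submodule k (C ⊗[k] C) :=
  LinearMap.range (TensorProduct.map X.subtype Y.subtype)

end CDP

open CDP

namespace CDP

variable {k : Type} [Field k] {C : Type} [AddCommGroup C] [Module k C]

lemma tmul_mem_tsub {X Y : Submodule k C} {x y : C} (hx : x ∈ X) (hy : y ∈ Y) :
    x ⊗ₜ[k] y ∈ tsub k C X Y :=
  ⟨(⟨x, hx⟩ : X) ⊗ₜ[k] (⟨y, hy⟩ : Y), rfl⟩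

lemma tsub_mono {X X' Y Y' : Submodule k C} (hX : X ≤ X') (hY : Y ≤ Y') :
    tsub k C X Y ≤ tsub k C X' Y' := by
  rintro _ ⟨v, rfl⟩
  induction v using TensorProduct.induction_on with
  | zero => simp
  | tmul x y => exact tmul_mem_tsub (hX x.2) (hY y.2)
  | add v w hv hw => rw [map_add]; exact add_mem hv hw

@[simp]
lemma tsub_top_top : tsub k C ⊤ ⊤ = ⊤ := by
  rw [eq_top_iff]
  rintro u -
  induction u using TensorProduct.induction_on with
  | zero => exact zero_mem _
  | tmul x y => exact tmul_mem_tsub Submodule.mem_top Submodule.mem_top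
  | add v w hv hw => exact add_mem hv hw

@[simp]
lemma tsub_bot_left (Y : Submodule k C) : tsub k C ⊥ Y = ⊥ := by
  refine eq_bot_iff.mpr ?_
  rintro _ ⟨v, rfl⟩
  induction v using TensorProduct.induction_on with
  | zero => simp
  | tmul x y => simp [Subsingleton.elim x 0]
  | add v w hv hw => rw [map_add]; exact add_mem hv hw

lemma map_mem_tsub (f g : C →ₗ[k] C) {X Y : Submodule k C} {u : C ⊗[k] C}
    (hu : u ∈ tsub k C X Y) : TensorProduct.map f g u ∈ tsub k C (X.map f) (Y.map g) := by
  obtain ⟨v, rfl⟩ := hu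
  induction v using TensorProduct.induction_on with
  | zero => simp
  | tmul x y =>
    simpa using tmul_mem_tsub (Submodule.mem_map_of_mem x.2) (Submodule.mem_map_of_mem y.2)
  | add v w hv hw => rw [map_add, map_add]; exact add_mem hv hw

lemma map_comm_tsub (X Y : Submodule k C) :
    (tsub k C X Y).map (TensorProduct.comm k C C).toLinearMap = tsub k C Y X := by
  rw [tsub, tsub, ← LinearMap.range_comp, ← TensorProduct.map_comp_comm_eq,
    LinearMap.range_comp_of_range_eq_top _ (LinearEquiv.range _)]

lemma comm_mem_tsub_sup_tsub_iff {X Y Z W : Submodule k C} {u : C ⊗[k] C} :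
    TensorProduct.comm k C C u ∈ tsub k C X Y ⊔ tsub k C Z W ↔
      u ∈ tsub k C W Z ⊔ tsub k C Y X := by
  rw [sup_comm, ← map_comm_tsub W Z, ← map_comm_tsub Y X, ← Submodule.map_sup,
    Submodule.mem_map_equiv, TensorProduct.comm_symm, TensorProduct.comm_comm]

lemma mem_tsub_top_iff {ι : Type*} [DecidableEq ι] (b : Module.Basis ι k C) {Y : Submodule k C}
    {u : C ⊗[k] C} :
    u ∈ tsub k C ⊤ Y ↔ ∀ i, TensorProduct.equivFinsuppOfBasisLeft b u i ∈ Y := by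
  constructor
  · rintro ⟨v, rfl⟩ i
    induction v using TensorProduct.induction_on with
    | zero => simp
    | tmul x y =>
      simpa [TensorProduct.equivFinsuppOfBasisLeft_apply_tmul_apply] using Y.smul_mem _ y.2
    | add v w hv hw => simpa using add_mem hv hw
  · intro h
    rw [← (TensorProduct.equivFinsuppOfBasisLeft b).symm_apply_apply u,
      TensorProduct.equivFinsuppOfBasisLeft_symm_apply]
    exact sum_mem fun i _ => tmul_mem_tsub Submodule.mem_top (h i)

lemma tsub_top_iInf {ι : Type*} (Y : ι → Submodule k C) :
    tsub k C ⊤ (⨅ i, Y i) = ⨅ i, tsub k C ⊤ (Y i) := by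
  classical
  ext u
  simp only [Submodule.mem_iInf, mem_tsub_top_iff (Module.Basis.ofVectorSpace k C)]
  exact forall_comm

lemma mem_tsub_sup_tsub_iInf {ι : Type*} {X : Submodule k C} {Y : ι → Submodule k C}
    {u : C ⊗[k] C} (hu : ∀ i, u ∈ tsub k C X ⊤ ⊔ tsub k C ⊤ (Y i)) :
    u ∈ tsub k C X ⊤ ⊔ tsub k C ⊤ (⨅ i, Y i) := by
  obtain ⟨r, hr⟩ := X.subtype.exists_leftInverse_of_injective X.ker_subtype
  set p : C →ₗ[k] C := X.subtype ∘ₗ r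
  set q : C →ₗ[k] C := LinearMap.id - p
  have hp : (⊤ : Submodule k C).map p ≤ X := by
    rintro _ ⟨x, -, rfl⟩
    exact (r x).2
  have hq : X.map q = ⊥ := by
    refine eq_bot_iff.mpr ?_
    rintro _ ⟨x, hx, rfl⟩
    simp [q, p, show r x = ⟨x, hx⟩ from LinearMap.congr_fun hr ⟨x, hx⟩]
  have hsplit : u = p.rTensor C u + q.rTensor C u := by
    rw [← LinearMap.add_apply, ← LinearMap.rTensor_add, add_sub_cancel, LinearMap.rTensor_id,
      LinearMap.id_apply]
  rw [hsplit]
  refine Submodule.add_mem_sup ?_ ?_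
  · have hu' : u ∈ tsub k C ⊤ ⊤ := by simp
    exact tsub_mono hp le_top (map_mem_tsub p LinearMap.id hu')
  · rw [tsub_top_iInf, Submodule.mem_iInf]
    intro i
    obtain ⟨v, hv, w, hw, rfl⟩ := Submodule.mem_sup.mp (hu i)
    have hv0 : q.rTensor C v = 0 := by
      have hv' := map_mem_tsub q LinearMap.id hv
      rwa [hq, tsub_bot_left, Submodule.mem_bot] at hv'
    rw [map_add, hv0, zero_add]
    exact tsub_mono le_top (Submodule.map_id _).le (map_mem_tsub q LinearMap.id hw)

lemma mem_tsub_iInf_sup_tsub_iInf {ι κ : Type*} {X : ι → Submodule k C}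
    {Y : κ → Submodule k C} {u : C ⊗[k] C} (hu : ∀ i j, u ∈ tsub k C (X i) ⊤ ⊔ tsub k C ⊤ (Y j)) :
    u ∈ tsub k C (⨅ i, X i) ⊤ ⊔ tsub k C ⊤ (⨅ j, Y j) := by
  have hcomm : ∀ i, TensorProduct.comm k C C u ∈ tsub k C (⨅ j, Y j) ⊤ ⊔ tsub k C ⊤ (X i) :=
    fun i => comm_mem_tsub_sup_tsub_iff.mpr (mem_tsub_sup_tsub_iInf (hu i))
  exact comm_mem_tsub_sup_tsub_iff.mp (mem_tsub_sup_tsub_iInf hcomm)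

lemma iSup_tsub_le_tsub_sup_tsub {F : ℤ → Submodule k C} (hF : Monotone F) (a b : ℤ) :
    ⨆ (p : ℤ × ℤ) (_ : p.1 + p.2 = a + b), tsub k C (F p.1) (F p.2) ≤
      tsub k C (F a) ⊤ ⊔ tsub k C ⊤ (F b) := by
  refine iSup₂_le fun p hp => ?_
  rcases le_or_gt p.1 a with hpa | hpa
  · exact (tsub_mono (hF hpa) le_top).trans le_sup_left
  · exact (tsub_mono le_top (hF (by omega : p.2 ≤ b))).trans le_sup_right

end CDP

theorem inf_of_exhaustive_coalgebra_filtration_is_coideal_general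
    (k : Type) [Field k] (C : Type) [AddCommGroup C] [Module k C] [Coalgebra k C]
    (F : ℤ → Submodule k C) (hmono : Monotone F)
    (hfil : ∀ z : ℤ,
      Submodule.map (Coalgebra.comul : C →ₗ[k] C ⊗[k] C) (F z) ≤
        ⨆ (p : ℤ × ℤ) (_ : p.1 + p.2 = z), tsub k C (F p.1) (F p.2)) :
    Submodule.map (Coalgebra.comul : C →ₗ[k] C ⊗[k] C) (⨅ z : ℤ, F z) ≤
      tsub k C ⊤ (⨅ z : ℤ, F z) ⊔ tsub k C (⨅ z : ℤ, F z) ⊤ := by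
  have hcomul : ∀ a b : ℤ, (⨅ z, F z).map (Coalgebra.comul : C →ₗ[k] C ⊗[k] C) ≤
      tsub k C (F a) ⊤ ⊔ tsub k C ⊤ (F b) := fun a b =>
    ((Submodule.map_mono (iInf_le F (a + b))).trans (hfil (a + b))).trans
      (iSup_tsub_le_tsub_sup_tsub hmono a b)
  rw [sup_comm]
  rintro _ ⟨x, hx, rfl⟩
  exact mem_tsub_iInf_sup_tsub_iInf fun a b => hcomul a b ⟨x, hx, rfl⟩

/-- **Lemma 1.6.** Let `C` be a counital coassociative `k`-coalgebra and
`{F_z}_{z ∈ ℤ}` an exhaustive coalgebra filtration of `C`, i.e. an increasing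
family of subspaces with `⋃_z F_z = C` and `Δ(F_z) ⊆ Σ_{r+s=z} F_r ⊗ F_s` for
all `z`.  Then `F_↓ := ⋂_z F_z` satisfies `Δ(F_↓) ⊆ C ⊗ F_↓ + F_↓ ⊗ C`, so
that `C / F_↓` inherits a quotient coalgebra structure. -/
theorem inf_of_exhaustive_coalgebra_filtration_is_coideal
    (k : Type) [Field k] (C : Type) [AddCommGroup C] [Module k C] [Coalgebra k C]
    (F : ℤ → Submodule k C) (hmono : Monotone F)
    (hexh : (⨆ z : ℤ, F z) = ⊤)
    (hfil : ∀ z : ℤ,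
      Submodule.map (Coalgebra.comul : C →ₗ[k] C ⊗[k] C) (F z) ≤
        ⨆ (p : ℤ × ℤ) (_ : p.1 + p.2 = z), tsub k C (F p.1) (F p.2)) :
    Submodule.map (Coalgebra.comul : C →ₗ[k] C ⊗[k] C) (⨅ z : ℤ, F z) ≤
      tsub k C ⊤ (⨅ z : ℤ, F z) ⊔ tsub k C (⨅ z : ℤ, F z) ⊤ :=
  inf_of_exhaustive_coalgebra_filtration_is_coideal_general k C F hmono hfil
end
end

section
/- Let k be a field and G a group, and let k[G] be the group Hopf algebra of G over k (with each g ∈ G group-like: Δ(g) = g ⊗ g, ε(g) = 1). Then for every n ∈ ℕ, ker δ_{n+1} = k·1; hence k[G]′ := ⋃_{n∈ℕ} ker δ_{n+1} = k·1. (Theorem 8.2) -/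
/-! Every `g ∈ G` is group-like, so `δ_{n+1}(g) = (g - 1)^{⊗(n+1)}`; in particular
`δ_{n+1}(1) = 0`. For `g ≠ 1` the functional `x₀ ⊗ ⋯ ⊗ xₙ ↦ ∏ᵢ xᵢ(g)` (product of
`g`-coefficients) sends `(h - 1)^{⊗(n+1)}` to `[h = g]^{n+1} = [h = g]`, so composed with
`δ_{n+1}` it is the `g`-coefficient itself. Hence an element of `ker δ_{n+1}` has no
coefficient outside `1`. -/

open TensorProduct PiTensorProduct

noncomputable section

namespace CDP

variable (k : Type) [Field k] (C : Type) [AddCommGroup C] [Module k C]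

variable {C} in
/-- The `δ`-filtration `D_n := ker δ_{n+1}`. -/
def Dfil (comul : C →ₗ[k] C ⊗[k] C) (counit : C →ₗ[k] k) (one : C) (n : ℕ) :
    Submodule k C :=
  LinearMap.ker (deltaN k comul counit one (n+1))

end CDP


open CDP

noncomputable section GroupAlgebra

variable (k : Type) [Field k] (G : Type) [Group G]

/-- The diagonal `G →* k[G] ⊗ k[G]`, `g ↦ g ⊗ g`. -/
def diagGA : G →* MonoidAlgebra k G ⊗[k] MonoidAlgebra k G where
  toFun g := MonoidAlgebra.of k G g ⊗ₜ[k] MonoidAlgebra.of k G g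
  map_one' := by simp [Algebra.TensorProduct.one_def, MonoidAlgebra.one_def]
  map_mul' g h := by simp [Algebra.TensorProduct.tmul_mul_tmul]

/-- The comultiplication of the group Hopf algebra `k[G]`, determined by
`Δ(g) = g ⊗ g` for `g ∈ G`. -/
def comulGA : MonoidAlgebra k G →ₐ[k] MonoidAlgebra k G ⊗[k] MonoidAlgebra k G :=
  MonoidAlgebra.lift k _ G (diagGA k G)

/-- The counit of the group Hopf algebra `k[G]`, determined by `ε(g) = 1` for
`g ∈ G`. -/
def counitGA : MonoidAlgebra k G →ₐ[k] k :=
  MonoidAlgebra.lift k k G 1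

section GroupLike

variable {k} {C : Type} [AddCommGroup C] [Module k C]

namespace CDP

theorem consTP_tprod_const (n : ℕ) (x : C) :
    consTP k C n (x ⊗ₜ[k] (⨂ₜ[k] _ : Fin n, x)) = ⨂ₜ[k] _ : Fin (n + 1), x := by
  have hx : (tpowOne k C).symm x = ⨂ₜ[k] _ : Fin 1, x :=
    (tpowOne k C).symm_apply_eq.mpr (subsingletonEquiv_apply_tprod (0 : Fin 1) fun _ => x).symm
  simp only [consTP, tpowSplit, LinearMap.comp_apply, map_tmul, LinearMap.id_apply,
    LinearEquiv.coe_coe, hx, LinearEquiv.trans_symm, LinearEquiv.trans_apply,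
    LinearEquiv.symm_symm, tmulEquiv_apply, reindex_symm, reindex_tprod,
    Sum.elim_lam_const_lam_const]

variable {comul : C →ₗ[k] C ⊗[k] C} {counit : C →ₗ[k] k}

theorem DeltaIter_apply_of_isGroupLike {x : C} (hΔ : comul x = x ⊗ₜ x) (hε : counit x = 1)
    (n : ℕ) : DeltaIter k comul counit n x = ⨂ₜ[k] _ : Fin n, x := by
  induction n with
  | zero =>
    rw [DeltaIter, LinearMap.comp_apply, LinearEquiv.coe_coe, hε,
      LinearEquiv.symm_apply_eq, isEmptyEquiv_apply_tprod]
  | succ n ih =>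
    rw [DeltaIter, LinearMap.comp_apply, LinearMap.comp_apply, hΔ, map_tmul,
      LinearMap.id_apply, ih, consTP_tprod_const]

theorem deltaN_apply_of_isGroupLike {x : C} (one : C) (hΔ : comul x = x ⊗ₜ x)
    (hε : counit x = 1) (n : ℕ) :
    deltaN k comul counit one n x = ⨂ₜ[k] _ : Fin n, (x - one) := by
  simp [deltaN, DeltaIter_apply_of_isGroupLike hΔ hε, proj, hε]

theorem span_singleton_le_Dfil {one : C} (hΔ : comul one = one ⊗ₜ one)
    (hε : counit one = 1) (n : ℕ) :
    Submodule.span k {one} ≤ Dfil k comul counit one n := by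
  rw [Submodule.span_singleton_le_iff_mem, Dfil, LinearMap.mem_ker,
    deltaN_apply_of_isGroupLike one hΔ hε]
  exact (PiTensorProduct.tprod k).map_coord_zero 0 (sub_self one)

end CDP

end GroupLike

section GroupAlgebraKernels

variable {k G}

theorem comulGA_of (g : G) :
    comulGA k G (MonoidAlgebra.of k G g) =
      MonoidAlgebra.of k G g ⊗ₜ[k] MonoidAlgebra.of k G g :=
  MonoidAlgebra.lift_of _ _

theorem counitGA_of (g : G) : counitGA k G (MonoidAlgebra.of k G g) = 1 :=
  MonoidAlgebra.lift_of _ _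

theorem coord_comp_deltaN {g : G} (hg : g ≠ 1) (n : ℕ) :
    dualDistrib (⨂ₜ[k] _ : Fin (n + 1), (MonoidAlgebra.basis G k).coord g) ∘ₗ
        deltaN k (comulGA k G).toLinearMap (counitGA k G).toLinearMap 1 (n + 1) =
      (MonoidAlgebra.basis G k).coord g := by
  classical
  refine (MonoidAlgebra.basis G k).ext fun h => ?_
  rw [LinearMap.comp_apply, MonoidAlgebra.basis_apply, ← MonoidAlgebra.of_apply,
    deltaN_apply_of_isGroupLike 1 (comulGA_of h) (counitGA_of h),
    PiTensorProduct.dualDistrib_apply, Finset.prod_const, Finset.card_fin]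
  have hcoord : ∀ h' : G, (MonoidAlgebra.basis G k).coord g (MonoidAlgebra.of k G h') =
      if h' = g then 1 else 0 := fun h' => by
    simp [Module.Basis.coord_apply, MonoidAlgebra.basis, Finsupp.single_apply]
  rw [map_sub, ← map_one (MonoidAlgebra.of k G), hcoord, hcoord, if_neg hg.symm, sub_zero]
  split_ifs <;> simp

theorem Dfil_comulGA_le_span_one (n : ℕ) :
    Dfil k (comulGA k G).toLinearMap (counitGA k G).toLinearMap 1 n ≤
      Submodule.span k {(1 : MonoidAlgebra k G)} := by
  intro x hx
  have hsupp : x ∈ MonoidAlgebra.supported k k {(1 : G)} := by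
    refine MonoidAlgebra.mem_supported'.mpr fun g hg => ?_
    have hcoord := LinearMap.congr_fun (coord_comp_deltaN hg n) x
    rw [LinearMap.comp_apply, LinearMap.mem_ker.mp hx, map_zero] at hcoord
    exact hcoord.symm
  rwa [MonoidAlgebra.supported_eq_span_single, Set.image_singleton,
    ← MonoidAlgebra.one_def] at hsupp

end GroupAlgebraKernels

/-- **Theorem 8.2.** Let `k` be a field and `G` a group, and let `k[G]` be the
group Hopf algebra of `G` over `k` (with each `g ∈ G` group-like:
`Δ(g) = g ⊗ g`, `ε(g) = 1`).  Then for every `n ∈ ℕ`, `ker δ_{n+1} = k·1`;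
hence `k[G]′ = ⋃_{n∈ℕ} ker δ_{n+1} = k·1`. -/
theorem groupAlgebra_delta_kernels_trivial :
    (∀ n : ℕ,
      Dfil k (comulGA k G).toLinearMap (counitGA k G).toLinearMap
          (1 : MonoidAlgebra k G) n =
        Submodule.span k {(1 : MonoidAlgebra k G)}) ∧
    (⨆ n : ℕ, Dfil k (comulGA k G).toLinearMap (counitGA k G).toLinearMap
          (1 : MonoidAlgebra k G) n) =
      Submodule.span k {(1 : MonoidAlgebra k G)} := by
  have hDfil : ∀ n : ℕ, Dfil k (comulGA k G).toLinearMap (counitGA k G).toLinearMap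
      (1 : MonoidAlgebra k G) n = Submodule.span k {(1 : MonoidAlgebra k G)} := fun n =>
    le_antisymm (Dfil_comulGA_le_span_one n)
      (span_singleton_le_Dfil ((comulGA k G).map_one.trans Algebra.TensorProduct.one_def)
        (counitGA k G).map_one n)
  exact ⟨hDfil, by rw [iSup_congr hDfil, iSup_const]⟩

end GroupAlgebra
end
end
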